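/- arXiv:2105.13595 — 2 statements merged into one kernel-verified Lean document; each statement's English description precedes it below -/
import Mathlib

section
/- For every i ≥ 2, the string σ^i(0) has 00 as a prefix, and for every j with 1 ≤ j < i, the string 0·1^j·0 (a 0, followed by j consecutive 1s, followed by a 0) occurs as a substring of σ^i(0). -/
/-!
Since σ fixes `1`, σ^(n+1)(0) = σ^n(0 0 1) = σ^n(0) σ^n(0) 1. Hence σ^n(0) is a prefix of every
later iterate, it begins with `0`, and it ends with `0 1^n`. At the junction of the
two copies of σ^j(0) in σ^(j+1)(0) we therefore read `0 1^j 0`, and σ^(j+1)(0) is a prefix of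
σ^i(0) whenever j < i.
-/

/-- The morphism σ on {0,1} (0 ↦ false, 1 ↦ true) with σ(0) = 001 and σ(1) = 1,
given by its images on symbols. -/
def sigmaRule : Bool → List Bool
  | false => [false, false, true]
  | true => [true]

/-- The homomorphic extension of σ to strings. -/
def sigmaM (w : List Bool) : List Bool := w.flatMap sigmaRule

lemma sigmaM_append (u v : List Bool) : sigmaM (u ++ v) = sigmaM u ++ sigmaM v :=
  List.flatMap_append

lemma iterate_sigmaM_append (n : ℕ) (u v : List Bool) :
    sigmaM^[n] (u ++ v) = sigmaM^[n] u ++ sigmaM^[n] v := by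
  induction n generalizing u v with
  | zero => rfl
  | succ n ih => rw [Function.iterate_succ_apply, sigmaM_append, ih]; rfl

lemma iterate_sigmaM_true (n : ℕ) : sigmaM^[n] [true] = [true] :=
  Function.iterate_fixed rfl n

lemma iterate_sigmaM_succ_false (n : ℕ) :
    sigmaM^[n + 1] [false] = sigmaM^[n] [false] ++ sigmaM^[n] [false] ++ [true] := by
  rw [Function.iterate_succ_apply]
  change sigmaM^[n] ([false] ++ [false] ++ [true]) = _
  rw [iterate_sigmaM_append, iterate_sigmaM_append, iterate_sigmaM_true]

lemma iterate_sigmaM_false_prefix_of_le {m n : ℕ} (h : m ≤ n) :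
    sigmaM^[m] [false] <+: sigmaM^[n] [false] := by
  induction n, h using Nat.le_induction with
  | base => exact List.prefix_rfl
  | succ n _ ih =>
    rw [iterate_sigmaM_succ_false, List.append_assoc]
    exact ih.trans (List.prefix_append _ _)

lemma false_append_replicate_true_suffix_iterate_sigmaM (n : ℕ) :
    [false] ++ List.replicate n true <:+ sigmaM^[n] [false] := by
  induction n with
  | zero => exact List.suffix_rfl
  | succ n ih =>
    obtain ⟨u, hu⟩ := ih
    refine ⟨sigmaM^[n] [false] ++ u, ?_⟩
    rw [iterate_sigmaM_succ_false, ← hu, List.replicate_succ']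
    simp only [List.append_assoc]

lemma false_replicate_true_false_infix_iterate_sigmaM (n : ℕ) :
    [false] ++ List.replicate n true ++ [false] <:+: sigmaM^[n + 1] [false] := by
  obtain ⟨u, hu⟩ := false_append_replicate_true_suffix_iterate_sigmaM n
  obtain ⟨v, hv⟩ := iterate_sigmaM_false_prefix_of_le (Nat.zero_le n)
  have key : sigmaM^[n + 1] [false] =
      u ++ ([false] ++ List.replicate n true ++ [false]) ++ (v ++ [true]) := by
    rw [iterate_sigmaM_succ_false]
    nth_rewrite 2 [← hv]
    rw [← hu]
    simp only [Function.iterate_zero, id_eq, List.append_assoc]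
  exact key ▸ List.infix_append _ _ _

/-- For every i ≥ 2, σ^i(0) has 00 as a prefix, and for every j with 1 ≤ j < i,
the string 0·1^j·0 occurs as a substring of σ^i(0). -/
theorem sigma_iter_prefix_and_runs (i : ℕ) (hi : 2 ≤ i) :
    [false, false] <+: sigmaM^[i] [false] ∧
    ∀ j, 1 ≤ j → j < i →
      ([false] ++ List.replicate j true ++ [false]) <:+: sigmaM^[i] [false] := by
  refine ⟨?_, fun j _ hj => ?_⟩
  · have hfirst : [false, false] <+: sigmaM^[1] [false] := by decide
    exact hfirst.trans (iterate_sigmaM_false_prefix_of_le (by omega))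
  · exact (false_replicate_true_false_infix_iterate_sigmaM j).trans
      (iterate_sigmaM_false_prefix_of_le hj).isInfix
end

section
/- Let L = (V, R, S, τ, d, n) be an L-system of size ℓ whose underlying morphism is expanding (|R(A)| ≥ 2 for every A ∈ V), whose axiom is a single symbol, and which generates its full coded level, i.e., w = τ(L_d) with n = |L_d|. Then d ≤ log₂ n, and there exists a context-free grammar of size at most (⌊log₂ n⌋ + 1)·ℓ generating w; hence the grammar has size O(ℓ log n). -/
/-- The homomorphic extension of a morphism `R : V → V⁺` to strings. -/
def morphApply {V : Type} (R : V → List V) (w : List V) : List V := w.flatMap R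

/-- An L-system `(V, R, S, τ, d, n)`: a rule per symbol, an axiom, a coding `τ`,
a level `d` where to stop, and the length `n` of the string to generate. -/
structure LSystem (V Γ : Type) where
  R : V → List V
  ax : List V
  coding : V → Γ
  d : ℕ
  n : ℕ

/-- The levels of an L-system: `L_0 = S` and `L_{i+1} = R(L_i)`. -/
def LSystem.level {V Γ : Type} (L : LSystem V Γ) (i : ℕ) : List V :=
  (morphApply L.R)^[i] L.ax

/-- Well-formedness: nonempty axiom and nonempty right-hand sides. -/
def LSystem.WF {V Γ : Type} (L : LSystem V Γ) : Prop :=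
  L.ax ≠ [] ∧ ∀ A, L.R A ≠ []

/-- The size of an L-system: `|S| + Σ_{A ∈ V} |R(A)|`. -/
def LSystem.size {V Γ : Type} [Fintype V] (L : LSystem V Γ) : ℕ :=
  L.ax.length + ∑ A, (L.R A).length

/-- The L-system generates `w = τ(L_d[1,n])`, the coding applied to the
length-`n` prefix of level `d`. -/
def LGenerates {V Γ : Type} (L : LSystem V Γ) (w : List Γ) : Prop :=
  w = ((L.level L.d).take L.n).map L.coding

/-- `ℓ(w)`: the size of the smallest L-system generating `w`. -/
noncomputable def lMeasure {Γ : Type} (w : List Γ) : ℕ :=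
  sInf { s | ∃ v, ∃ L : LSystem (Fin v) Γ, L.WF ∧ LGenerates L w ∧ L.size = s }

/-- A context-free grammar (in the smallest-grammar sense) over the terminal
alphabet `T`: nonterminals `X_0, …, X_{r-1}`, one rule per nonterminal whose
right-hand side is a list of terminals (`Sum.inl`) and nonterminals
(`Sum.inr`). -/
structure CFG (T : Type) where
  r : ℕ
  rules : Fin r → List (T ⊕ Fin r)

/-- Well-formedness: each rule mentions only strictly earlier nonterminals. -/
def CFG.WF {T : Type} (G : CFG T) : Prop :=
  ∀ k, ∀ s ∈ G.rules k, ∀ j, s = Sum.inr j → (j : ℕ) < (k : ℕ)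

/-- The size of a grammar: total length of the right-hand sides. -/
def CFG.size {T : Type} (G : CFG T) : ℕ := ∑ k, (G.rules k).length

/-- The grammar generates `w`: the expansion function (terminals expand to
themselves, a nonterminal to the concatenation of the expansions of its
rule's symbols) maps the last nonterminal to `w`. -/
def CFGGenerates {T : Type} (G : CFG T) (w : List T) : Prop :=
  ∃ e : Fin G.r → List T,
    (∀ k, e k = (G.rules k).flatMap (Sum.elim (fun a => [a]) e)) ∧
    ∃ h : 0 < G.r, e ⟨G.r - 1, Nat.sub_lt h Nat.one_pos⟩ = w

/-- `g(w)`: the size of the smallest context-free grammar generating `w`. -/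
noncomputable def gMeasure {T : Type} (w : List T) : ℕ :=
  sInf { s | ∃ G : CFG T, G.WF ∧ CFGGenerates G w ∧ G.size = s }

/-!
Take a nonterminal `(i, B)` for every level `i ≤ d` and symbol `B`, deriving `τ(Rⁱ(B))`: its rule
is `τ(B)` at level `0`, and `R(B)` with each symbol read at level `i - 1` otherwise; the start rule
is the axiom read at level `d`. This grammar has size `|V| + d·Σ_A |R(A)| + |S| ≤ (d + 1)·ℓ`, and
since `R` at least doubles lengths, `2ᵈ ≤ |L_d| = n`.
-/

theorem morphApply_singleton {V : Type} (R : V → List V) (A : V) : morphApply R [A] = R A :=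
  List.flatMap_singleton R A

theorem morphApply_iterate_eq_flatMap {V : Type} (R : V → List V) (i : ℕ) (w : List V) :
    (morphApply R)^[i] w = w.flatMap fun B => (morphApply R)^[i] [B] := by
  induction i generalizing w with
  | zero => simp
  | succ i ih =>
    simp only [Function.iterate_succ_apply, morphApply_singleton]
    rw [ih, morphApply, List.flatMap_assoc]
    simp only [← ih]

theorem mul_length_le_length_morphApply {V : Type} {R : V → List V} {k : ℕ}
    (hR : ∀ A, k ≤ (R A).length) (w : List V) : k * w.length ≤ (morphApply R w).length := by
  simpa [morphApply, List.length_flatMap, mul_comm] using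
    List.card_nsmul_le_sum (w.map fun A => (R A).length) k (by simp [hR])

theorem LSystem.level_succ {V Γ : Type} (L : LSystem V Γ) (i : ℕ) :
    L.level (i + 1) = morphApply L.R (L.level i) :=
  Function.iterate_succ_apply' _ _ _

theorem LSystem.pow_mul_length_ax_le_length_level {V Γ : Type} (L : LSystem V Γ) {k : ℕ}
    (hR : ∀ A, k ≤ (L.R A).length) (i : ℕ) : k ^ i * L.ax.length ≤ (L.level i).length := by
  induction i with
  | zero => simp [LSystem.level]
  | succ i ih =>
    calc k ^ (i + 1) * L.ax.length = k * (k ^ i * L.ax.length) := by ring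
      _ ≤ k * (L.level i).length := Nat.mul_le_mul_left k ih
      _ ≤ (L.level (i + 1)).length :=
        L.level_succ i ▸ mul_length_le_length_morphApply hR _

theorem finProdFinEquiv_lt_of_fst_lt {m n : ℕ} {a b : Fin m × Fin n} (h : a.1 < b.1) :
    finProdFinEquiv a < finProdFinEquiv b := by
  rw [Fin.lt_def, finProdFinEquiv_apply_val, finProdFinEquiv_apply_val]
  have : n * (a.1 + 1) ≤ n * b.1 := Nat.mul_le_mul_left n h
  nlinarith [a.2.2]

theorem CFG.exists_of_equivFin {T ι : Type} [Fintype ι] {r : ℕ} (rules : ι → List (T ⊕ ι))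
    (e : ι → List T) (he : ∀ i, e i = (rules i).flatMap (Sum.elim (fun a => [a]) e))
    (σ : ι ≃ Fin (r + 1)) (hσ : ∀ i j, Sum.inr j ∈ rules i → σ j < σ i)
    (top : ι) (htop : σ top = Fin.last r) :
    ∃ G : CFG T, G.WF ∧ CFGGenerates G (e top) ∧ G.size = ∑ i, (rules i).length := by
  refine ⟨⟨r + 1, fun k => (rules (σ.symm k)).map (Sum.map id σ)⟩, ?_, ?_, ?_⟩
  · rintro k _ hs j rfl
    obtain ⟨_ | i, hi, hij⟩ := List.mem_map.1 hs
    · cases hij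
    · obtain rfl := Sum.inr_injective hij
      simpa using hσ _ _ hi
  · refine ⟨e ∘ σ.symm, fun k => ?_, Nat.succ_pos r, ?_⟩
    · rw [Function.comp_apply, he, List.flatMap_map]
      congr 1
      funext s
      cases s <;> simp
    · show e (σ.symm (Fin.last r)) = e top
      rw [← htop, Equiv.symm_apply_apply]
  · simp only [CFG.size, List.length_map]
    exact Equiv.sum_comp σ.symm fun i => (rules i).length

namespace LSystem

variable {V Γ : Type} (L : LSystem V Γ)

/-- `some (i, B)` derives `τ(Rⁱ(B))`; `none` is the start symbol. -/
def grammarRules : Option (Fin (L.d + 1) × V) → List (Γ ⊕ Option (Fin (L.d + 1) × V))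
  | none => L.ax.map fun B => .inr (some (Fin.last L.d, B))
  | some (i, B) => Fin.cases (motive := fun _ => List _) [.inl (L.coding B)]
      (fun j => (L.R B).map fun C => .inr (some (j.castSucc, C))) i

def grammarExpansion : Option (Fin (L.d + 1) × V) → List Γ
  | none => (L.level L.d).map L.coding
  | some (i, B) => ((morphApply L.R)^[i] [B]).map L.coding

theorem grammarExpansion_eq (x : Option (Fin (L.d + 1) × V)) :
    L.grammarExpansion x =
      (L.grammarRules x).flatMap (Sum.elim (fun a => [a]) L.grammarExpansion) := by
  rcases x with _ | ⟨i, B⟩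
  · simp [grammarRules, grammarExpansion, List.flatMap_map, ← List.map_flatMap, LSystem.level,
      ← morphApply_iterate_eq_flatMap]
  cases i using Fin.cases with
  | zero => simp [grammarRules, grammarExpansion]
  | succ i => simp [grammarRules, grammarExpansion, List.flatMap_map, ← List.map_flatMap,
      ← morphApply_iterate_eq_flatMap, Function.iterate_succ_apply, morphApply_singleton]

theorem sum_length_grammarRules [Fintype V] :
    ∑ x, (L.grammarRules x).length =
      Fintype.card V + L.d * ∑ A, (L.R A).length + L.ax.length := by
  rw [Fintype.sum_option, Fintype.sum_prod_type, Fin.sum_univ_succ]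
  simp only [grammarRules, List.length_map, Fin.cases_zero, Fin.cases_succ, List.length_singleton,
    Finset.sum_const, Finset.card_univ, Fintype.card_fin, smul_eq_mul, mul_one]
  ring

/-- Ranks nonterminals by level, the start symbol last. -/
noncomputable def grammarRank [Fintype V] :
    Option (Fin (L.d + 1) × V) ≃ Fin ((L.d + 1) * Fintype.card V + 1) :=
  (Equiv.optionCongr ((Equiv.prodCongr (.refl _) (Fintype.equivFin V)).trans finProdFinEquiv)).trans
    finSuccEquivLast.symm

theorem grammarRank_lt_of_mem_grammarRules [Fintype V] {x y : Option (Fin (L.d + 1) × V)}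
    (h : Sum.inr y ∈ L.grammarRules x) : L.grammarRank y < L.grammarRank x := by
  rcases x with _ | ⟨i, B⟩
  · simp only [grammarRules, List.mem_map, Sum.inr.injEq] at h
    obtain ⟨C, -, rfl⟩ := h
    simp [grammarRank, finSuccEquivLast_symm_some, Fin.castSucc_lt_last]
  cases i using Fin.cases with
  | zero => simp [grammarRules] at h
  | succ i =>
    simp only [grammarRules, Fin.cases_succ, List.mem_map, Sum.inr.injEq] at h
    obtain ⟨C, -, rfl⟩ := h
    simp only [grammarRank, Equiv.trans_apply, Equiv.optionCongr_apply, Option.map_some,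
      finSuccEquivLast_symm_some, Fin.castSucc_lt_castSucc_iff]
    exact finProdFinEquiv_lt_of_fst_lt (by simp [Fin.lt_def])

theorem exists_cfg_generates_level [Fintype V] :
    ∃ G : CFG Γ, G.WF ∧ CFGGenerates G ((L.level L.d).map L.coding) ∧
      G.size = Fintype.card V + L.d * ∑ A, (L.R A).length + L.ax.length := by
  rw [← sum_length_grammarRules]
  exact CFG.exists_of_equivFin L.grammarRules L.grammarExpansion L.grammarExpansion_eq
    L.grammarRank (fun _ _ => L.grammarRank_lt_of_mem_grammarRules) none (by simp [grammarRank])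

end LSystem

theorem expanding_lsystem_to_grammar_general {V Γ : Type} [Fintype V]
    (L : LSystem V Γ) (hwf : L.WF)
    (hexp : ∀ A, 2 ≤ (L.R A).length)
    (hn : L.n = (L.level L.d).length) :
    L.d ≤ Nat.log 2 L.n ∧
    ∃ G : CFG Γ, G.WF ∧ CFGGenerates G ((L.level L.d).map L.coding) ∧
      G.size ≤ (Nat.log 2 L.n + 1) * L.size := by
  have hd : L.d ≤ Nat.log 2 L.n := by
    refine Nat.le_log_of_pow_le one_lt_two (hn ▸ ?_)
    calc 2 ^ L.d ≤ 2 ^ L.d * L.ax.length :=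
          Nat.le_mul_of_pos_right _ (List.length_pos_iff.2 hwf.1)
      _ ≤ (L.level L.d).length := L.pow_mul_length_ax_le_length_level hexp L.d
  obtain ⟨G, hG, hgen, hsize⟩ := L.exists_cfg_generates_level
  refine ⟨hd, G, hG, hgen, hsize ▸ ?_⟩
  have hcard : Fintype.card V ≤ ∑ A, (L.R A).length := by
    simpa using Finset.card_nsmul_le_sum Finset.univ (fun A => (L.R A).length) 1
      fun A _ => one_le_two.trans (hexp A)
  have hmul : L.d * ∑ A, (L.R A).length ≤ Nat.log 2 L.n * ∑ A, (L.R A).length :=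
    Nat.mul_le_mul_right _ hd
  rw [LSystem.size]
  nlinarith

/-- For an L-system of size ℓ whose morphism is expanding (all rules have length
≥ 2), whose axiom is a single symbol, and which generates its full coded level
(n = |L_d|, w = τ(L_d)): then d ≤ log₂ n, and there is a context-free grammar
of size at most (⌊log₂ n⌋ + 1)·ℓ generating w (hence of size O(ℓ log n)). -/
theorem expanding_lsystem_to_grammar {V Γ : Type} [Fintype V]
    (L : LSystem V Γ) (hwf : L.WF)
    (hexp : ∀ A, 2 ≤ (L.R A).length)
    (hax : L.ax.length = 1)
    (hn : L.n = (L.level L.d).length) :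
    L.d ≤ Nat.log 2 L.n ∧
    ∃ G : CFG Γ, G.WF ∧ CFGGenerates G ((L.level L.d).map L.coding) ∧
      G.size ≤ (Nat.log 2 L.n + 1) * L.size :=
  expanding_lsystem_to_grammar_general L hwf hexp hn
end
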